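/- Let d ≥ e ≥ 0 be real numbers whose difference f = d − e is non-terminating. For n ∈ ℤ, let l be the least nonnegative integer such that d_{n−l−1} ≠ e_{n−l−1} (such l exists). Then the digit f_n of f at 10^n equals d_n − e_n mod 10 if d_{n−l−1} > e_{n−l−1}, and equals d_n − e_n − 1 mod 10 if d_{n−l−1} < e_{n−l−1}. -/
import Mathlib


lemma floor_div_ten (r : ℝ) : ⌊r / 10⌋ = ⌊r⌋ / 10 := by
  have h1 : 10 * (⌊r⌋ / 10) ≤ ⌊r⌋ := by omega
  have h2 : ⌊r⌋ + 1 ≤ 10 * (⌊r⌋ / 10) + 10 := by omega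
  rw [Int.floor_eq_iff]
  constructor
  · have h1' : ((10 * (⌊r⌋ / 10) : ℤ) : ℝ) ≤ (⌊r⌋ : ℝ) := by exact_mod_cast h1
    have := Int.floor_le r
    push_cast at h1' ⊢
    linarith
  · have h2' : ((⌊r⌋ + 1 : ℤ) : ℝ) ≤ ((10 * (⌊r⌋ / 10) + 10 : ℤ) : ℝ) := by exact_mod_cast h2
    have := Int.lt_floor_add_one r
    push_cast at h2' ⊢
    linarith

lemma floor_succ (x : ℝ) (m : ℤ) :
    ⌊x * 10 ^ (-(m - 1))⌋ = 10 * ⌊x * 10 ^ (-m)⌋ + (⌊x * 10 ^ (-(m-1))⌋ % 10) := by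
  have h : x * 10 ^ (-m) = x * 10 ^ (-(m - 1)) / 10 := by
    rw [div_eq_mul_inv, mul_assoc, ← zpow_neg_one,
      ← zpow_add₀ (by norm_num : (10:ℝ) ≠ 0)]
    ring_nf
  rw [h, floor_div_ten]
  omega

/-- The digit at `10^n` in the canonical decimal expansion of a nonnegative
real number `x`: `⌊x·10^{−n}⌋ mod 10`. -/
noncomputable def digit (x : ℝ) (n : ℤ) : ℤ := ⌊x * 10 ^ (-n)⌋ % 10

/-- A real is non-terminating if its decimal digits are not eventually `0`. -/
def NonTerminating (x : ℝ) : Prop := ∀ N : ℤ, ∃ m : ℤ, m ≤ N ∧ digit x m ≠ 0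

lemma floor_shift (x : ℝ) (n : ℤ) (j : ℕ) :
    ⌊x * 10 ^ (-(n - (j:ℤ) - 1))⌋ = 10 * ⌊x * 10 ^ (-(n - (j:ℤ)))⌋ + digit x (n - j - 1) := by
  have := floor_succ x (n - j)
  rw [digit]
  convert this using 4 <;> ring

/-- Digit-wise subtraction rule: if `d ≥ e ≥ 0`, `f = d − e` is non-terminating
and `l` is the least nonnegative integer with `d_{n−l−1} ≠ e_{n−l−1}`, then
`f_n = d_n − e_n mod 10` if `d_{n−l−1} > e_{n−l−1}`, and
`f_n = d_n − e_n − 1 mod 10` if `d_{n−l−1} < e_{n−l−1}`. -/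
theorem subtraction_digit_rule (d e : ℝ) (he : 0 ≤ e) (hde : e ≤ d)
    (hf : NonTerminating (d - e)) (n : ℤ) (l : ℕ)
    (hlt : ∀ i : ℕ, i < l → digit d (n - i - 1) = digit e (n - i - 1))
    (hne : digit d (n - l - 1) ≠ digit e (n - l - 1)) :
    (digit d (n - l - 1) > digit e (n - l - 1) →
      digit (d - e) n = (digit d n - digit e n) % 10) ∧
    (digit d (n - l - 1) < digit e (n - l - 1) →
      digit (d - e) n = (digit d n - digit e n - 1) % 10) := by
  set a := d * 10 ^ (-n) with ha
  set b := e * 10 ^ (-n) with hb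
  -- first l digits below n agree
  have key : ∀ j : ℕ, j ≤ l →
      ⌊d * 10 ^ (-(n - (j:ℤ)))⌋ - ⌊e * 10 ^ (-(n - (j:ℤ)))⌋
        = 10 ^ j * (⌊a⌋ - ⌊b⌋) := by
    intro j
    induction j with
    | zero => intro _; simp [ha, hb]
    | succ j ih =>
      intro hj
      have hj' : j < l := Nat.lt_of_succ_le hj
      have hcast : (n - ((j+1 : ℕ) : ℤ)) = n - (j:ℤ) - 1 := by push_cast; ring
      rw [hcast, floor_shift d n j, floor_shift e n j, hlt j hj']
      have := ih (le_of_lt hj')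
      push_cast
      push_cast at this
      ring_nf
      ring_nf at this
      linarith
  -- the step at level l+1
  set k : ℕ := l + 1 with hk
  set δ : ℤ := digit d (n - l - 1) - digit e (n - l - 1) with hδ
  have keyk : ⌊d * 10 ^ (-(n - (k:ℤ)))⌋ - ⌊e * 10 ^ (-(n - (k:ℤ)))⌋
      = 10 ^ k * (⌊a⌋ - ⌊b⌋) + δ := by
    have hcast : (n - ((k:ℕ):ℤ)) = n - (l:ℤ) - 1 := by rw [hk]; push_cast; ring
    rw [hcast, floor_shift d n l, floor_shift e n l]
    have h0 := key l le_rfl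
    have h10 : (10:ℤ)^k = 10 * 10^l := by rw [hk, pow_succ]; ring
    rw [h10]
    linarith [h0]
  -- real bounds
  set A0 := ⌊a⌋ with hA0
  set B0 := ⌊b⌋ with hB0
  set Ak := ⌊d * 10 ^ (-(n - (k:ℤ)))⌋ with hAk
  set Bk := ⌊e * 10 ^ (-(n - (k:ℤ)))⌋ with hBk
  have hmula : d * 10 ^ (-(n - (k:ℤ))) = a * 10 ^ (k:ℕ) := by
    rw [ha, mul_assoc, ← zpow_natCast (10:ℝ) k, ← zpow_add₀ (by norm_num : (10:ℝ) ≠ 0)]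
    congr 1
    ring
  have hmulb : e * 10 ^ (-(n - (k:ℤ))) = b * 10 ^ (k:ℕ) := by
    rw [hb, mul_assoc, ← zpow_natCast (10:ℝ) k, ← zpow_add₀ (by norm_num : (10:ℝ) ≠ 0)]
    congr 1
    ring
  have P : (0:ℝ) < 10 ^ (k:ℕ) := by positivity
  have ha0l : (A0:ℝ) ≤ a := Int.floor_le a
  have ha0u : a < A0 + 1 := Int.lt_floor_add_one a
  have hb0l : (B0:ℝ) ≤ b := Int.floor_le b
  have hb0u : b < B0 + 1 := Int.lt_floor_add_one b
  have hakl : (Ak:ℝ) ≤ a * 10 ^ (k:ℕ) := hmula ▸ Int.floor_le _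
  have haku : a * 10 ^ (k:ℕ) < Ak + 1 := hmula ▸ Int.lt_floor_add_one _
  have hbkl : (Bk:ℝ) ≤ b * 10 ^ (k:ℕ) := hmulb ▸ Int.floor_le _
  have hbku : b * 10 ^ (k:ℕ) < Bk + 1 := hmulb ▸ Int.lt_floor_add_one _
  have keykR : (Ak:ℝ) - Bk = 10 ^ (k:ℕ) * (A0 - B0) + δ := by exact_mod_cast keyk
  have hab : (d - e) * 10 ^ (-n) = a - b := by rw [ha, hb]; ring
  have hdig : digit (d - e) n = ⌊a - b⌋ % 10 := by rw [digit, hab]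
  have hdd : digit d n = A0 % 10 := rfl
  have hee : digit e n = B0 % 10 := rfl
  constructor
  · intro h1
    have hδ1 : (1:ℝ) ≤ δ := by exact_mod_cast (by omega : (1:ℤ) ≤ δ)
    have hfl : ⌊a - b⌋ = A0 - B0 := by
      rw [Int.floor_eq_iff]
      constructor
      · have hmul : ((A0 - B0 : ℤ):ℝ) * 10 ^ (k:ℕ) < (a - b) * 10 ^ (k:ℕ) := by
          push_cast
          nlinarith
        have := lt_of_mul_lt_mul_right hmul (le_of_lt P)
        push_cast at this ⊢
        linarith
      · push_cast
        linarith
    rw [hdig, hfl, hdd, hee]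
    omega
  · intro h1
    have hδ1 : (δ:ℝ) ≤ -1 := by exact_mod_cast (by omega : δ ≤ -1)
    have hfl : ⌊a - b⌋ = A0 - B0 - 1 := by
      rw [Int.floor_eq_iff]
      constructor
      · push_cast
        linarith
      · have hmul : (a - b) * 10 ^ (k:ℕ) < ((A0 - B0 : ℤ):ℝ) * 10 ^ (k:ℕ) := by
          push_cast
          nlinarith
        have := lt_of_mul_lt_mul_right hmul (le_of_lt P)
        push_cast at this ⊢
        linarith
    rw [hdig, hfl, hdd, hee]
    omega
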